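/- arXiv:math/9908115 — 4 statements merged into one kernel-verified Lean document; each statement's English description precedes it below -/
import Mathlib

section
/- For every x ∈ h₀ there exists a unique y ∈ h₀ such that B(a i − b i, y) = B(a i + b i, x) for all i ∈ Γ₁. (This defines the Cayley transform C_T : h₀ → h₀, C_T x = y, of the triple.) -/
open LinearMap (BilinForm)

/-- Existence and uniqueness of the Cayley transform `C_T : h₀ → h₀`:
for every `x ∈ h₀` there is a unique `y ∈ h₀` such that
`B (a i - b i) y = B (a i + b i) x` for all `i ∈ Γ₁`. -/
theorem cayley_transform_exists_unique
    (V : Type*) [AddCommGroup V] [Module ℂ V] [FiniteDimensional ℂ V]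
    (B : BilinForm ℂ V) (hBnd : B.Nondegenerate) (hBsymm : B.IsSymm)
    (Γ₁ : Type*) [Fintype Γ₁] (a b : Γ₁ → V)
    (hab : ∀ i j, B (a i) (a j) = B (b i) (b j))
    (l : Submodule ℂ V) (hl : ∀ v, v ∈ l ↔ ∀ i, B (a i - b i) v = 0)
    (hlnd : (B.restrict l).Nondegenerate) :
    ∀ x ∈ B.orthogonal l, ∃! y, y ∈ B.orthogonal l ∧
      ∀ i, B (a i - b i) y = B (a i + b i) x := by
  classical
  intro x hx
  have hs : ∀ u v : V, B u v = B v u := fun u v => hBsymm.eq u v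
  -- key skew identity
  have key : ∀ i j, B (a i + b i) (a j - b j) = - B (a j + b j) (a i - b i) := by
    intro i j
    have h1 := hab i j
    have h2 := hab j i
    have h3 := hs (b i) (a j)
    have h4 := hs (b j) (a i)
    simp only [map_add, map_sub, LinearMap.add_apply, LinearMap.sub_apply] at *
    linear_combination h1 + h2 + h3 + h4
  -- the linear map v ↦ (i ↦ B (a i - b i) v)
  set T : V →ₗ[ℂ] (Γ₁ → ℂ) := LinearMap.pi (fun i => B (a i - b i)) with hT
  have hTapp : ∀ v i, T v i = B (a i - b i) v := fun v i => rfl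
  set c : Γ₁ → ℂ := fun i => B (a i + b i) x with hc
  -- c is in the range of T
  have hcmem : c ∈ LinearMap.range T := by
    have hle : Submodule.span ℂ {c} ≤ LinearMap.range T := by
      rw [← Subspace.dualAnnihilator_le_dualAnnihilator_iff]
      intro φ hφ
      rw [Submodule.mem_dualAnnihilator] at hφ ⊢
      rintro w hw
      rw [Submodule.mem_span_singleton] at hw
      obtain ⟨r, rfl⟩ := hw
      rw [map_smul]
      -- coefficients of φ
      set lam : Γ₁ → ℂ := fun i => φ (Pi.single i 1) with hlam
      have hφsum : ∀ f : Γ₁ → ℂ, φ f = ∑ i, f i * lam i := by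
        intro f
        conv_lhs => rw [show f = ∑ i, Pi.single i (f i) from (Finset.univ_sum_single f).symm]
        rw [map_sum]
        refine Finset.sum_congr rfl fun i _ => ?_
        have h1 : (Pi.single i (f i) : Γ₁ → ℂ) = f i • (Pi.single i 1 : Γ₁ → ℂ) := by
          funext j
          by_cases h : j = i <;> simp [Pi.single_apply, h]
        rw [h1, map_smul, smul_eq_mul, hlam]
      set wm : V := ∑ i, lam i • (a i - b i) with hwm
      set wp : V := ∑ i, lam i • (a i + b i) with hwp
      have hwm0 : wm = 0 := by
        apply hBnd.1
        intro v
        have : B wm v = φ (T v) := by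
          rw [hwm, map_sum]
          rw [hφsum (T v)]
          simp only [map_smul, LinearMap.sum_apply, LinearMap.smul_apply, smul_eq_mul]
          exact Finset.sum_congr rfl fun i _ => (mul_comm _ _)
        rw [this]
        exact hφ (T v) ⟨v, rfl⟩
      have hwpl : wp ∈ l := by
        rw [hl]
        intro j
        have h0 : B (a j + b j) wm = 0 := by rw [hwm0, map_zero]
        rw [hwm, map_sum] at h0
        simp only [map_smul, smul_eq_mul] at h0
        rw [hwp, map_sum]
        simp only [map_smul, smul_eq_mul]
        calc ∑ i, lam i * B (a j - b j) (a i + b i)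
            = ∑ i, -(lam i * B (a j + b j) (a i - b i)) := by
              refine Finset.sum_congr rfl fun i _ => ?_
              rw [hs (a j - b j) (a i + b i), key i j]; ring
          _ = 0 := by rw [Finset.sum_neg_distrib, h0, neg_zero]
      have hφc : φ c = 0 := by
        rw [hφsum c]
        have : ∑ i, c i * lam i = B wp x := by
          rw [hwp, map_sum]
          simp only [map_smul, LinearMap.sum_apply, LinearMap.smul_apply, smul_eq_mul]
          exact Finset.sum_congr rfl fun i _ => (mul_comm _ _)
        rw [this]
        exact hx wp hwpl
      rw [hφc, smul_zero]
    exact hle (Submodule.mem_span_singleton_self c)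
  obtain ⟨y', hy'⟩ := hcmem
  -- decompose y' = u + y with u ∈ l, y ∈ orthogonal l
  have hrefl : B.IsRefl := hBsymm.isRefl
  have hcompl := LinearMap.BilinForm.isCompl_orthogonal_of_restrict_nondegenerate hrefl hlnd
  have hsup : l ⊔ B.orthogonal l = ⊤ := hcompl.sup_eq_top
  have : y' ∈ l ⊔ B.orthogonal l := by rw [hsup]; trivial
  obtain ⟨u, hu, y, hy, hyy⟩ := Submodule.mem_sup.mp this
  have hTu : ∀ i, B (a i - b i) u = 0 := (hl u).mp hu
  refine ⟨y, ⟨hy, fun i => ?_⟩, ?_⟩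
  · have := congrFun hy' i
    rw [hTapp] at this
    rw [← hyy, map_add] at this
    rw [hTu i, zero_add] at this
    exact this
  · rintro z ⟨hz, hzeq⟩
    obtain ⟨hymem, hyeq⟩ : y ∈ B.orthogonal l ∧ ∀ i, B (a i - b i) y = B (a i + b i) x := by
      constructor
      · exact hy
      · intro i
        have := congrFun hy' i
        rw [hTapp, ← hyy, map_add] at this
        rw [hTu i, zero_add] at this
        exact this
    have hdl : z - y ∈ l := by
      rw [hl]
      intro i
      rw [map_sub, hzeq i, hyeq i, sub_self]
    have hdo : z - y ∈ B.orthogonal l := Submodule.sub_mem _ hz hymem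
    have : (⟨z - y, hdl⟩ : l) = 0 := by
      apply hlnd.1
      rintro ⟨n, hn⟩
      simp only [LinearMap.BilinForm.restrict_apply, LinearMap.domRestrict_apply]
      rw [hs]
      exact hdo n hn
    have := Subtype.mk_eq_mk.mp this
    rw [sub_eq_zero] at this
    exact this
end

section
/- Any linear map C : h₀ → h₀ satisfying B(a i − b i, C x) = B(a i + b i, x) for all x ∈ h₀ and all i ∈ Γ₁ is skew-symmetric with respect to B, i.e. B(C x, x') + B(x, C x') = 0 for all x, x' ∈ h₀. -/
open LinearMap (BilinForm)

/-- Any linear map `C : h₀ → h₀` with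
`B (a i - b i) (C x) = B (a i + b i) x` for all `x ∈ h₀` and `i ∈ Γ₁`
is skew-symmetric with respect to `B`. -/
theorem cayley_transform_skew_symmetric
    (V : Type*) [AddCommGroup V] [Module ℂ V] [FiniteDimensional ℂ V]
    (B : BilinForm ℂ V) (hBnd : B.Nondegenerate) (hBsymm : B.IsSymm)
    (Γ₁ : Type*) [Fintype Γ₁] (a b : Γ₁ → V)
    (hab : ∀ i j, B (a i) (a j) = B (b i) (b j))
    (l : Submodule ℂ V) (hl : ∀ v, v ∈ l ↔ ∀ i, B (a i - b i) v = 0)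
    (hlnd : (B.restrict l).Nondegenerate)
    (C : (B.orthogonal l) →ₗ[ℂ] (B.orthogonal l))
    (hC : ∀ (x : B.orthogonal l) (i : Γ₁),
      B (a i - b i) (C x : V) = B (a i + b i) (x : V)) :
    ∀ x x' : B.orthogonal l,
      B (C x : V) (x' : V) + B (x : V) (C x' : V) = 0 := by
  have hrefl : B.IsRefl := hBsymm.isRefl
  set S : Submodule ℂ V := Submodule.span ℂ (Set.range fun i => a i - b i) with hSdef
  have hlS : l = B.orthogonal S := by
    ext v
    rw [hl, LinearMap.BilinForm.mem_orthogonal_iff]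
    constructor
    · intro h n hn
      induction hn using Submodule.span_induction with
      | mem n hn => obtain ⟨i, rfl⟩ := hn; exact h i
      | zero => simp [LinearMap.BilinForm.IsOrtho]
      | add x y _ _ hx hy =>
        simp only [LinearMap.BilinForm.IsOrtho, map_add, LinearMap.add_apply] at *
        rw [hx, hy, add_zero]
      | smul c x _ hx =>
        simp only [LinearMap.BilinForm.IsOrtho, map_smul, LinearMap.smul_apply] at *
        rw [hx, smul_zero]
    · intro h i
      exact h _ (Submodule.subset_span ⟨i, rfl⟩)
  have hS : B.orthogonal l = S := by
    rw [hlS, LinearMap.BilinForm.orthogonal_orthogonal hBnd hrefl]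
  have key : ∀ i j, B (a j + b j) (a i - b i) + B (a i + b i) (a j - b j) = 0 := by
    intro i j
    have h1 := hab i j
    have h2 := hab j i
    have h3 := hBsymm.eq (b j) (a i)
    have h4 := hBsymm.eq (a j) (b i)
    simp only [map_add, map_sub, LinearMap.add_apply, LinearMap.sub_apply,
      RingHom.id_apply] at *
    linear_combination h1 + h2 + h3 - h4
  intro x x'
  obtain ⟨c, hc⟩ : ∃ c : Γ₁ → ℂ, ∑ i, c i • (a i - b i) = (x : V) := by
    rw [← Submodule.mem_span_range_iff_exists_fun]
    exact hS.le x.2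
  obtain ⟨d, hd⟩ : ∃ d : Γ₁ → ℂ, ∑ i, d i • (a i - b i) = (x' : V) := by
    rw [← Submodule.mem_span_range_iff_exists_fun]
    exact hS.le x'.2
  have e1 : B (C x : V) (x' : V) = ∑ j, d j * B (a j + b j) (x : V) := by
    rw [← hBsymm.eq ((x' : V)) ((C x : V))]
    rw [← hd]
    simp only [map_sum, map_smul, LinearMap.sum_apply, LinearMap.smul_apply,
      smul_eq_mul, RingHom.id_apply]
    exact Finset.sum_congr rfl fun j _ => by rw [hC x j]
  have e2 : B (x : V) (C x' : V) = ∑ i, c i * B (a i + b i) (x' : V) := by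
    rw [← hc]
    simp only [map_sum, map_smul, LinearMap.sum_apply, LinearMap.smul_apply,
      smul_eq_mul, RingHom.id_apply]
    exact Finset.sum_congr rfl fun i _ => by rw [hC x' i]
  rw [e1, e2, ← hc, ← hd]
  simp only [map_sum, map_smul, smul_eq_mul, Finset.mul_sum]
  rw [Finset.sum_comm (s := Finset.univ) (t := Finset.univ)]
  rw [← Finset.sum_add_distrib]
  apply Finset.sum_eq_zero
  intro i _
  rw [← Finset.sum_add_distrib]
  apply Finset.sum_eq_zero
  intro j _
  linear_combination (c i * d j) * key i j
end

section
/- T restricts to a bijection from Γ₁ ∖ Γ₃ onto Γ₂ ∖ Γ₃, and this restriction satisfies the Belavin–Drinfeld nilpotency condition: for every α ∈ Γ₁ ∖ Γ₃ there exists k ≥ 1 such that T^j(α) ∈ Γ₁ ∖ Γ₃ for all 0 ≤ j < k while T^k(α) ∉ Γ₁ ∖ Γ₃. In other words, (Γ₁ ∖ Γ₃, Γ₂ ∖ Γ₃, T) is an ordinary Belavin–Drinfeld triple. -/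
/-!
Since `T` is injective on `Γ₁` and `Γ` is finite, a point whose whole forward orbit stays in `Γ₁`
is periodic, so `Γ₃` is exactly the set of points that never escape `Γ₁`. That set is
forward invariant, and a point of `Γ₁` lies in it as soon as its image does; both halves of the
statement follow from these two facts, the nilpotency condition taking `k` to be the first time
the orbit leaves `Γ₁`.
-/

open Set

namespace Function

variable {α : Type*} {f : α → α} {s t : Set α} {x : α}

def nonEscaping (f : α → α) (s : Set α) : Set α := {x | ∀ n, f^[n] x ∈ s}

theorem nonEscaping_subset : nonEscaping f s ⊆ s := fun _ hx => hx 0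

theorem mapsTo_nonEscaping : MapsTo f (nonEscaping f s) (nonEscaping f s) :=
  fun x hx n => by simpa only [← iterate_succ_apply] using hx (n + 1)

theorem mem_nonEscaping_of_apply_mem (hx : x ∈ s) (hfx : f x ∈ nonEscaping f s) :
    x ∈ nonEscaping f s
  | 0 => hx
  | n + 1 => by simpa only [iterate_succ_apply] using hfx n

theorem nonEscaping_subset_periodicPts [Finite α] (hf : InjOn f s) :
    nonEscaping f s ⊆ periodicPts f := by
  intro x hx
  have hmaps : MapsTo f (nonEscaping f s) (nonEscaping f s) := mapsTo_nonEscaping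
  have hinj : Injective hmaps.restrict :=
    hmaps.restrict_inj.2 (hf.mono nonEscaping_subset)
  have hsemiconj : Semiconj Subtype.val hmaps.restrict f := fun _ => hmaps.val_restrict_apply _
  exact hsemiconj.mapsTo_periodicPts (hinj.mem_periodicPts ⟨x, hx⟩)

theorem mem_nonEscaping_iff_exists_isPeriodicPt [Finite α] (hf : InjOn f s) :
    x ∈ nonEscaping f s ↔ ∃ k, 1 ≤ k ∧ (∀ j < k, f^[j] x ∈ s) ∧ f^[k] x = x := by
  refine ⟨fun hx => ?_, fun ⟨k, hk, hs, hper⟩ n => ?_⟩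
  · obtain ⟨k, hk, hper⟩ := nonEscaping_subset_periodicPts hf hx
    exact ⟨k, hk, fun j _ => hx j, hper⟩
  · rw [← IsPeriodicPt.iterate_mod_apply hper]
    exact hs _ (Nat.mod_lt _ hk)

theorem bijOn_diff_nonEscaping (h : BijOn f s t) :
    BijOn f (s \ nonEscaping f s) (t \ nonEscaping f s) := by
  refine ⟨fun x hx => ⟨h.mapsTo hx.1, fun hfx => hx.2 (mem_nonEscaping_of_apply_mem hx.1 hfx)⟩,
    h.injOn.mono sdiff_subset, fun y hy => ?_⟩
  obtain ⟨x, hx, rfl⟩ := h.surjOn hy.1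
  exact ⟨x, ⟨hx, fun hx' => hy.2 (mapsTo_nonEscaping hx')⟩, rfl⟩

theorem exists_first_exit (hx : x ∈ s \ nonEscaping f s) :
    ∃ k, 1 ≤ k ∧ (∀ j < k, f^[j] x ∈ s \ nonEscaping f s) ∧ f^[k] x ∉ s := by
  classical
  have hexit : ∃ n, f^[n] x ∉ s := by simpa [nonEscaping] using hx.2
  refine ⟨Nat.find hexit, ?_, fun j hj => ⟨?_, fun hj_mem => ?_⟩, Nat.find_spec hexit⟩
  · refine Nat.one_le_iff_ne_zero.2 fun h0 => ?_
    exact Nat.find_spec hexit (by simpa [h0] using hx.1)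
  · exact not_not.1 (Nat.find_min hexit hj)
  · apply Nat.find_spec hexit
    simpa only [← iterate_add_apply, Nat.sub_add_cancel hj.le] using hj_mem (Nat.find hexit - j)

end Function

/-- For a generalized Belavin–Drinfeld triple `(Γ₁, Γ₂, T)`,
the map `T` restricts to a bijection of `Γ₁ \ Γ₃` onto `Γ₂ \ Γ₃` satisfying the
Belavin–Drinfeld nilpotency condition: every `α ∈ Γ₁ \ Γ₃` eventually leaves
`Γ₁ \ Γ₃` under iteration of `T`. -/
theorem gamma_complement_is_BD_triple
    (Γ : Type*) [Finite Γ] (Γ₁ Γ₂ : Set Γ) (T : Γ → Γ)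
    (hT : Set.BijOn T Γ₁ Γ₂)
    (Γ₃ : Set Γ)
    (hΓ₃ : ∀ α, α ∈ Γ₃ ↔ ∃ k, 1 ≤ k ∧ (∀ j < k, T^[j] α ∈ Γ₁) ∧ T^[k] α = α) :
    Set.BijOn T (Γ₁ \ Γ₃) (Γ₂ \ Γ₃) ∧
    ∀ α ∈ Γ₁ \ Γ₃, ∃ k, 1 ≤ k ∧ (∀ j < k, T^[j] α ∈ Γ₁ \ Γ₃) ∧
      T^[k] α ∉ Γ₁ \ Γ₃ := by
  obtain rfl : Γ₃ = Function.nonEscaping T Γ₁ :=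
    Set.ext fun α => (hΓ₃ α).trans (Function.mem_nonEscaping_iff_exists_isPeriodicPt hT.injOn).symm
  refine ⟨Function.bijOn_diff_nonEscaping hT, fun α hα => ?_⟩
  obtain ⟨k, hk, hstay, hexit⟩ := Function.exists_first_exit hα
  exact ⟨k, hk, hstay, fun h => hexit h.1⟩
end

section
/- Let N ≥ 1, let c : Fin N → ℂ, and let φ be the ℂ-algebra endomorphism of the multivariate polynomial ring ℂ[X₀, …, X_{N−1}] = MvPolynomial (Fin N) ℂ determined by φ(X_i) = c_i · X_{i+1} (indices taken modulo N, i.e. cyclically). Then for every n ≥ 0, φ maps the submodule of homogeneous polynomials of degree n into itself, and the trace of the restriction of φ to this finite-dimensional submodule equals (∏_{i=0}^{N−1} c_i)^{n/N} if N divides n, and equals 0 otherwise. (This computes the graded trace of the automorphism B e^λ on the symmetric algebra of a single B-orbit of root vectors, the key computation in the proof of the twisted Weyl denominator formula, Lemma 3.3.) -/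
open MvPolynomial

set_option linter.unusedSectionVars false

section Aux


variable (N : ℕ) [NeZero N] (c : Fin N → ℂ)
  (φ : MvPolynomial (Fin N) ℂ →ₐ[ℂ] MvPolynomial (Fin N) ℂ)
  (hφ : ∀ i : Fin N, φ (X i) = c i • X (i + 1))

/-- cyclic shift of an exponent vector -/
noncomputable def shiftd (d : Fin N →₀ ℕ) : Fin N →₀ ℕ :=
  Finsupp.equivFunOnFinite.symm (fun j => d (j - 1))

@[simp] lemma shiftd_apply (d : Fin N →₀ ℕ) (j : Fin N) : shiftd N d j = d (j - 1) := rfl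

lemma monomial_eq_prod (d : Fin N →₀ ℕ) :
    (monomial d (1:ℂ)) = ∏ i : Fin N, (X i : MvPolynomial (Fin N) ℂ) ^ d i := by
  rw [monomial_eq, C_1, one_mul, Finsupp.prod_fintype]
  intro i; exact pow_zero _

include hφ in
lemma phi_monomial (d : Fin N →₀ ℕ) :
    φ (monomial d (1:ℂ)) = (∏ i, c i ^ d i) • monomial (shiftd N d) 1 := by
  rw [monomial_eq_prod, map_prod]
  simp_rw [map_pow, hφ, smul_pow]
  simp_rw [smul_eq_C_mul, Finset.prod_mul_distrib, ← map_prod, ← smul_eq_C_mul]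
  congr 1
  rw [monomial_eq_prod]
  exact Fintype.prod_equiv (Equiv.addRight (1 : Fin N)) _ _ (by intro i; simp)

lemma degree_eq_sum_fintype (d : Fin N →₀ ℕ) : d.degree = ∑ i : Fin N, d i := by
  rw [Finsupp.degree]
  exact Finset.sum_subset (Finset.subset_univ _)
    (fun i _ hi => Finsupp.notMem_support_iff.mp hi)

instance fin_degree (n : ℕ) : Finite {d : Fin N →₀ ℕ // d.degree = n} := by
  apply Finite.of_injective (fun d => (fun i => (⟨d.1 i, by
    have := Finsupp.le_degree i d.1
    omega⟩ : Fin (n+1)) : Fin N → Fin (n+1)))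
  intro d e h
  ext i
  have := congrFun h i
  simpa [Fin.mk.injEq] using congrArg Fin.val (congrFun h i)

lemma monomial_mem (n : ℕ) (d : Fin N →₀ ℕ) (hd : d.degree = n) :
    monomial d (1:ℂ) ∈ homogeneousSubmodule (Fin N) ℂ n := by
  rw [mem_homogeneousSubmodule]
  exact isHomogeneous_monomial _ hd

/-- basis of homogeneous component by monomials -/
noncomputable def homBasis (n : ℕ) :
    Module.Basis {d : Fin N →₀ ℕ // d.degree = n} ℂ (homogeneousSubmodule (Fin N) ℂ n) := by
  apply Module.Basis.mk (v := fun d : {d : Fin N →₀ ℕ // d.degree = n} => (⟨monomial d.1 1, monomial_mem N n d.1 d.2⟩ :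
      homogeneousSubmodule (Fin N) ℂ n))
  · apply LinearIndependent.of_comp (homogeneousSubmodule (Fin N) ℂ n).subtype
    have : ((homogeneousSubmodule (Fin N) ℂ n).subtype ∘ fun d : {d : Fin N →₀ ℕ // d.degree = n}
        => (⟨monomial d.1 1, monomial_mem N n d.1 d.2⟩ : homogeneousSubmodule (Fin N) ℂ n))
        = (basisMonomials (Fin N) ℂ) ∘ Subtype.val := by
      ext d : 1
      simp [coe_basisMonomials]
    rw [this]
    exact (basisMonomials (Fin N) ℂ).linearIndependent.comp _ Subtype.val_injective
  · rintro ⟨p, hp⟩ -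
    have hps : (⟨p, hp⟩ : homogeneousSubmodule (Fin N) ℂ n)
        = ∑ d ∈ p.support.attach, (coeff d.1 p) •
          (⟨monomial d.1 1, monomial_mem N n d.1 (by
            rw [Finsupp.degree_eq_weight_one]
            exact (mem_homogeneousSubmodule n p).mp hp (mem_support_iff.mp d.2))⟩ : homogeneousSubmodule (Fin N) ℂ n) := by
      apply Subtype.ext
      push_cast
      simp_rw [smul_monomial, smul_eq_mul, mul_one]
      rw [Finset.sum_attach p.support (fun d => monomial d (coeff d p))]
      exact p.as_sum
    rw [hps]
    apply Submodule.sum_mem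
    rintro d -
    have hdeg : (d.1 : Fin N →₀ ℕ).degree = n := by
      rw [Finsupp.degree_eq_weight_one]
      exact (mem_homogeneousSubmodule n p).mp hp (mem_support_iff.mp d.2)
    exact Submodule.smul_mem _ _ (Submodule.subset_span ⟨⟨d.1, hdeg⟩, rfl⟩)

@[simp] lemma homBasis_apply (n : ℕ) (d : {d : Fin N →₀ ℕ // d.degree = n}) :
    homBasis N n d = ⟨monomial d.1 1, monomial_mem N n d.1 d.2⟩ := by
  rw [homBasis, Module.Basis.mk_apply]

lemma shiftd_degree (d : Fin N →₀ ℕ) : (shiftd N d).degree = d.degree := by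
  rw [degree_eq_sum_fintype, degree_eq_sum_fintype]
  exact Fintype.sum_equiv (Equiv.subRight (1 : Fin N)) _ _ (fun j => rfl)

open Fin.NatCast in
lemma shiftd_fix_const {d : Fin N →₀ ℕ} (h : shiftd N d = d) (i : Fin N) : d i = d 0 := by
  have step : ∀ j : Fin N, d j = d (j + 1) := by
    intro j
    simpa using DFunLike.congr_fun h (j + 1)
  have key : ∀ k : ℕ, d ((k : Fin N)) = d 0 := by
    intro k
    induction k with
    | zero => simp
    | succ m ih => rw [Nat.cast_add, Nat.cast_one, ← step, ih]
  have := key i.val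
  rwa [Fin.cast_val_eq_self] at this

lemma const_degree (d : Fin N →₀ ℕ) (h : ∀ i, d i = d 0) : d.degree = N * d 0 := by
  rw [degree_eq_sum_fintype]
  simp_rw [fun i => h i]
  simp [Finset.sum_const, mul_comm]

include hφ in
lemma phi_preserves (n : ℕ) : ∀ p ∈ homogeneousSubmodule (Fin N) ℂ n,
    φ.toLinearMap p ∈ homogeneousSubmodule (Fin N) ℂ n := by
  intro p hp
  simp only [AlgHom.toLinearMap_apply]
  rw [show φ p = φ (∑ d ∈ p.support, monomial d (coeff d p)) from by rw [← p.as_sum],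
    map_sum]
  apply Submodule.sum_mem
  intro d hd
  have hdeg : d.degree = n := by
    rw [Finsupp.degree_eq_weight_one]
    exact (mem_homogeneousSubmodule n p).mp hp (mem_support_iff.mp hd)
  have : monomial d (coeff d p) = coeff d p • monomial d (1:ℂ) := by
    rw [smul_monomial, smul_eq_mul, mul_one]
  rw [this, map_smul, phi_monomial N c φ hφ]
  exact Submodule.smul_mem _ _ (Submodule.smul_mem _ _
    (monomial_mem N n _ (by rw [shiftd_degree]; exact hdeg)))


end Aux

/-- Let `φ` be the algebra endomorphism of `ℂ[X₀, …, X_{N-1}]`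
with `φ (X i) = c i • X (i + 1)` (indices cyclically in `Fin N`). Then `φ`
preserves each homogeneous component, and the trace of its restriction to the
degree-`n` component is `(∏ i, c i) ^ (n / N)` if `N ∣ n`, and `0` otherwise. -/
theorem graded_trace_cyclic_twist
    (N : ℕ) [NeZero N] (c : Fin N → ℂ)
    (φ : MvPolynomial (Fin N) ℂ →ₐ[ℂ] MvPolynomial (Fin N) ℂ)
    (hφ : ∀ i : Fin N, φ (X i) = c i • X (i + 1)) :
    ∀ n : ℕ, ∃ h : ∀ p ∈ homogeneousSubmodule (Fin N) ℂ n,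
        φ.toLinearMap p ∈ homogeneousSubmodule (Fin N) ℂ n,
      LinearMap.trace ℂ (homogeneousSubmodule (Fin N) ℂ n)
          (φ.toLinearMap.restrict h)
        = if N ∣ n then (∏ i, c i) ^ (n / N) else 0 := by
  intro n
  refine ⟨phi_preserves N c φ hφ n, ?_⟩
  haveI : Fintype {d : Fin N →₀ ℕ // d.degree = n} := Fintype.ofFinite _
  set b := homBasis N n with hb
  rw [LinearMap.trace_eq_matrix_trace ℂ b, Matrix.trace]
  have hdiag : ∀ d : {d : Fin N →₀ ℕ // d.degree = n},
      (LinearMap.toMatrix b b (φ.toLinearMap.restrict (phi_preserves N c φ hφ n))).diag d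
      = if shiftd N d.1 = d.1 then (∏ i, c i ^ d.1 i) else 0 := by
    intro d
    rw [Matrix.diag_apply, LinearMap.toMatrix_apply]
    have : (φ.toLinearMap.restrict (phi_preserves N c φ hφ n)) (b d)
        = (∏ i, c i ^ d.1 i) • b ⟨shiftd N d.1, by rw [shiftd_degree]; exact d.2⟩ := by
      apply Subtype.ext
      push_cast
      rw [hb, homBasis_apply]
      simp only [LinearMap.restrict_apply]
      rw [AlgHom.toLinearMap_apply, phi_monomial N c φ hφ]
      simp [homBasis_apply]
    rw [this, map_smul, hb, Module.Basis.repr_self]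
    by_cases hfix : shiftd N d.1 = d.1
    · rw [if_pos hfix]
      have he : (⟨shiftd N d.1, by rw [shiftd_degree]; exact d.2⟩ :
          {d : Fin N →₀ ℕ // d.degree = n}) = d := Subtype.ext hfix
      simp [he]
    · rw [if_neg hfix]
      rw [Finsupp.smul_single, Finsupp.single_eq_of_ne
        (fun hc => hfix (congrArg Subtype.val hc).symm)]
  rw [Finset.sum_congr rfl (fun d _ => hdiag d)]
  by_cases hNn : N ∣ n
  · obtain ⟨k, hk⟩ := hNn
    have hkd : n / N = k := by rw [hk]; exact Nat.mul_div_cancel_left k (Nat.pos_of_ne_zero (NeZero.ne N))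
    set d₀ : {d : Fin N →₀ ℕ // d.degree = n} :=
      ⟨Finsupp.equivFunOnFinite.symm (fun _ => k), by
        rw [const_degree N _ (fun i => rfl)]
        simp [hk]⟩ with hd₀
    rw [if_pos ⟨k, hk⟩, hkd]
    rw [Finset.sum_eq_single_of_mem d₀ (Finset.mem_univ _)]
    · have hsh : shiftd N d₀.1 = d₀.1 := by
        ext j; simp [hd₀, shiftd]
      rw [if_pos hsh, ← Finset.prod_pow]
      rfl
    · intro d _ hd
      rcases eq_or_ne (shiftd N d.1) d.1 with hfix | hfix
      · exfalso
        apply hd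
        have hconst := shiftd_fix_const N hfix
        have : d.1 0 = k := by
          have h1 : n = N * d.1 0 := by
            have h0 := const_degree N d.1 hconst
            rw [d.2] at h0
            exact h0
          have h2 : N * k = N * d.1 0 := by rw [← hk]; exact h1
          exact (Nat.eq_of_mul_eq_mul_left (Nat.pos_of_ne_zero (NeZero.ne N)) h2).symm
        apply Subtype.ext
        ext i
        simp [hd₀, hconst i, this]
      · rw [if_neg hfix]
  · rw [if_neg hNn]
    apply Finset.sum_eq_zero
    intro d _
    rcases eq_or_ne (shiftd N d.1) d.1 with hfix | hfix
    · exfalso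
      apply hNn
      have h0 := const_degree N d.1 (shiftd_fix_const N hfix)
      rw [d.2] at h0
      exact ⟨_, h0⟩
    · rw [if_neg hfix]
end
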